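/- Let A be a C*-algebra, π : A → Mₙ(ℂ) a surjective *-homomorphism, and let ė₁,…,ėₙ ∈ Mₙ(ℂ)₊ satisfy ė₁ + ⋯ + ėₙ ≤ 1. Suppose g ∈ A₊ satisfies π(g) = 1. Then there exist e₁,…,eₙ ∈ A₊ with π(eᵢ) = ėᵢ for all i and e₁ + ⋯ + eₙ ≤ g. -/

import Mathlib

open scoped ComplexOrder

open Matrix

open scoped Matrix.Norms.L2Operator in
noncomputable instance (n : ℕ) : CStarAlgebra (Matrix (Fin n) (Fin n) ℂ) := {}

lemma matrix_spec_le_one {n : ℕ} {M : Matrix (Fin n) (Fin n) ℂ}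
    (h1 : ((1 : Matrix (Fin n) (Fin n) ℂ) - M).PosSemidef) :
    ∀ x ∈ spectrum ℝ M, x ≤ 1 := by
  intro x hx
  have hx' : (x : ℂ) ∈ spectrum ℂ M := spectrum.algebraMap_mem ℂ hx
  rw [← AlgEquiv.spectrum_eq (Matrix.toLinAlgEquiv (Pi.basisFun ℂ (Fin n))),
    ← Module.End.hasEigenvalue_iff_mem_spectrum] at hx'
  obtain ⟨v, hv⟩ := hx'.exists_hasEigenvector
  have hMv : M *ᵥ v = (x : ℂ) • v := by
    have h := hv.apply_eq_smul
    rw [Matrix.toLinAlgEquiv_apply] at h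
    have hw : ∀ (w : Fin n → ℂ), ∑ j, w j • (Pi.basisFun ℂ (Fin n)) j = w := by
      intro w; ext k
      simp [Pi.basisFun_apply, Pi.single_apply, Finset.sum_apply, mul_comm]
    rw [show ⇑((Pi.basisFun ℂ (Fin n)).repr v) = v from rfl, hw] at h
    exact h
  have key := h1.dotProduct_mulVec_nonneg v
  rw [Matrix.sub_mulVec, Matrix.one_mulVec, hMv, dotProduct_sub] at key
  have hc : 0 < dotProduct (star v) v := dotProduct_star_self_pos_iff.mpr hv.2
  set c := dotProduct (star v) v with hcdef
  have hsm : dotProduct (star v) ((x:ℂ) • v) = (x:ℂ) * c := by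
    rw [dotProduct_smul]; rfl
  rw [hsm] at key
  -- key : 0 ≤ c - x * c
  have hcre : 0 < c.re := by
    rw [Complex.lt_def] at hc; exact hc.1
  have hre : 0 ≤ (c - (x:ℂ) * c).re := by
    rw [Complex.le_def] at key; simpa using key.1
  have : x * c.re ≤ 1 * c.re := by
    simp only [Complex.sub_re, Complex.mul_re, Complex.ofReal_re, Complex.ofReal_im] at hre
    nlinarith [hre]
  exact le_of_mul_le_mul_right this hcre

open scoped MatrixOrder in
lemma matrix_psd_sqrt {n : ℕ} {M : Matrix (Fin n) (Fin n) ℂ} (hM : M.PosSemidef) :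
    ∃ X : Matrix (Fin n) (Fin n) ℂ, Xᴴ = X ∧ X * X = M := by
  obtain ⟨X, hX, -, h⟩ :=
    CFC.exists_sqrt_of_isSelfAdjoint_of_quasispectrumRestricts hM.isHermitian
      (QuasispectrumRestricts.nnreal_of_nonneg hM.nonneg)
  exact ⟨X, hX.star_eq, h⟩

/-- Lifting orthogonal positive elements: if `π : A → Mₙ(ℂ)` is a surjective *-homomorphism,
`ė 1, …, ė n` are positive matrices with `ė 1 + ⋯ + ė n ≤ 1`, and `g ∈ A₊` satisfies
`π g = 1`, then there are positive lifts `e i ∈ A₊` of the `ė i` with `e 1 + ⋯ + e n ≤ g`. -/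
theorem stmt18 {A : Type*} [CStarAlgebra A] [PartialOrder A] [StarOrderedRing A]
    (n : ℕ) (π : A →⋆ₐ[ℂ] Matrix (Fin n) (Fin n) ℂ)
    (hsurj : Function.Surjective π)
    (ed : Fin n → Matrix (Fin n) (Fin n) ℂ)
    (hpos : ∀ i, (ed i).PosSemidef)
    (hsum : ((1 : Matrix (Fin n) (Fin n) ℂ) - ∑ i, ed i).PosSemidef)
    (g : A) (hg : 0 ≤ g) (hπg : π g = 1) :
    ∃ e : Fin n → A, (∀ i, 0 ≤ e i) ∧ (∀ i, π (e i) = ed i) ∧ ∑ i, e i ≤ g := by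

  have hπcont : Continuous π :=
    AddMonoidHomClass.continuous_of_bound π 1 (by
      simpa only [one_mul] using fun a => NonUnitalStarAlgHom.norm_apply_le π a)
  choose b hb using fun i => matrix_psd_sqrt (hpos i)
  choose a ha using fun i => hsurj (b i)
  set c : Fin n → A := fun i => star (a i) * a i with hcdef
  have hc0 : ∀ i, 0 ≤ c i := fun i => star_mul_self_nonneg _
  have hπc : ∀ i, π (c i) = ed i := by
    intro i
    have : π (c i) = star (π (a i)) * π (a i) := by simp [hcdef, map_star]
    rw [this, ha i, star_eq_conjTranspose, (hb i).1, (hb i).2]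
  set s : A := ∑ i, c i with hsdef
  have hs0 : 0 ≤ s := Finset.sum_nonneg fun i _ => hc0 i
  have hssa : IsSelfAdjoint s := .of_nonneg hs0
  have hπs : π s = ∑ i, ed i := by simp [hsdef, map_sum, hπc]
  -- the excess part
  set f : ℝ → ℝ := fun x => max (x - 1) 0 with hfdef
  have hfcont : Continuous f := by fun_prop
  set t : A := cfc f s with htdef
  have ht0 : 0 ≤ t := cfc_nonneg fun x _ => le_max_right _ _
  have htsa : IsSelfAdjoint t := .of_nonneg ht0
  have hst : s ≤ 1 + t := by
    have h1 : s = cfc (id : ℝ → ℝ) s := (cfc_id ℝ s hssa).symm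
    have h2 : (1 : A) + t = cfc (fun x : ℝ => 1 + f x) s := by
      rw [cfc_const_add 1 f s (by fun_prop) hssa, _root_.map_one]
    rw [h1, h2]
    exact cfc_mono fun x _ => by
      simp only [id_eq]
      rcases le_total x 1 with h | h
      · calc x ≤ 1 := h
          _ ≤ 1 + max (x - 1) 0 := le_add_of_nonneg_right (le_max_right _ _)
      · calc x = 1 + (x - 1) := by ring
          _ ≤ 1 + max (x - 1) 0 := by gcongr; exact le_max_left _ _
  have hMsa : _root_.IsSelfAdjoint (∑ i, ed i) := by
    refine Finset.sum_induction _ _ (fun x y hx hy => hx.add hy) (IsSelfAdjoint.zero _)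
      fun i _ => (hpos i).1.isSelfAdjoint
  have hπt : π t = 0 := by
    have hmap : π (cfc f s) = cfc f (π s) :=
      StarAlgHom.map_cfc π f s (by fun_prop) hπcont hssa (hπs ▸ hMsa)
    rw [htdef, hmap, hπs]
    have hcongr : cfc f (∑ i, ed i) = cfc (fun _ : ℝ => (0:ℝ)) (∑ i, ed i) := by
      apply cfc_congr
      intro x hx
      have := matrix_spec_le_one hsum x hx
      simp [hfdef, sub_nonpos.mpr this]
    rw [hcongr, cfc_const 0 (∑ i, ed i) hMsa, map_zero]
  -- u := (1 + t)^{-1/2}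
  set h : ℝ → ℝ := fun x => Real.sqrt (1 + max x 0)⁻¹ with hhdef
  have hhc : Continuous h := by
    have h1 : Continuous fun x : ℝ => (1 + max x 0) := by fun_prop
    have h2 : Continuous fun x : ℝ => (1 + max x 0)⁻¹ :=
      h1.inv₀ fun x => by positivity
    exact Real.continuous_sqrt.comp h2
  set u : A := cfc h t with hudef
  have husa : _root_.IsSelfAdjoint u := cfc_predicate h t
  have hπu : π u = 1 := by
    have hmap : π (cfc h t) = cfc h (π t) :=
      StarAlgHom.map_cfc π h t (by fun_prop) hπcont htsa (by rw [hπt]; exact .zero _)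
    rw [hudef, hmap, hπt, show (0 : Matrix (Fin n) (Fin n) ℂ) = algebraMap ℝ _ 0 by simp,
      cfc_algebraMap]
    norm_num [hhdef]
  have hspec_t : ∀ x ∈ spectrum ℝ t, 0 ≤ x := fun x hx => spectrum_nonneg_of_nonneg ht0 hx
  have hkey : u * ((1 : A) + t) * u = 1 := by
    have e1 : cfc (fun x : ℝ => 1 + x) t = (1 : A) + t := by
      rw [show (fun x : ℝ => 1 + x) = (fun x : ℝ => 1 + id x) from rfl,
        cfc_const_add 1 (id : ℝ → ℝ) t (by fun_prop) htsa, _root_.map_one, cfc_id ℝ t htsa]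
    rw [mul_assoc, ← e1, hudef,
      ← cfc_mul (fun x : ℝ => 1 + x) h t (by fun_prop) (by fun_prop),
      ← cfc_mul h (fun x : ℝ => (1 + x) * h x) t (by fun_prop) (by fun_prop)]
    have hcongr : cfc (fun x : ℝ => h x * ((1 + x) * h x)) t = cfc (fun _ : ℝ => (1:ℝ)) t := by
      apply cfc_congr
      intro x hx
      have hx0 : 0 ≤ x := hspec_t x hx
      have hpos1 : (0:ℝ) < 1 + x := by linarith
      simp only [hhdef, max_eq_left hx0]
      rw [show Real.sqrt (1+x)⁻¹ * ((1+x) * Real.sqrt (1+x)⁻¹)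
          = (Real.sqrt (1+x)⁻¹ * Real.sqrt (1+x)⁻¹) * (1+x) by ring,
        Real.mul_self_sqrt (by positivity), inv_mul_cancel₀ (ne_of_gt hpos1)]
    rw [hcongr, cfc_const 1 t htsa, _root_.map_one]
  have husu : u * s * u ≤ 1 := by
    calc u * s * u = star u * s * u := by rw [husa.star_eq]
      _ ≤ star u * (1 + t) * u := star_left_conjugate_le_conjugate hst u
      _ = u * (1 + t) * u := by rw [husa.star_eq]
      _ = 1 := hkey
  set q : A := cfc Real.sqrt g with hqdef
  have hq0 : 0 ≤ q := cfc_nonneg fun x _ => Real.sqrt_nonneg x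
  have hqsa : _root_.IsSelfAdjoint q := .of_nonneg hq0
  have hgsa : _root_.IsSelfAdjoint g := .of_nonneg hg
  have hqq : q * q = g := by
    rw [hqdef, ← cfc_mul Real.sqrt Real.sqrt g (by fun_prop) (by fun_prop)]
    have hcg : cfc (fun x => Real.sqrt x * Real.sqrt x) g = cfc (id : ℝ → ℝ) g := by
      apply cfc_congr
      intro x hx
      exact Real.mul_self_sqrt (spectrum_nonneg_of_nonneg hg hx)
    rw [hcg, cfc_id ℝ g hgsa]
  have hπq : π q = 1 := by
    have hmap : π (cfc Real.sqrt g) = cfc Real.sqrt (π g) :=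
      StarAlgHom.map_cfc π Real.sqrt g (by fun_prop) hπcont hgsa (by rw [hπg]; exact IsSelfAdjoint.one _)
    rw [hqdef, hmap, hπg, show (1 : Matrix (Fin n) (Fin n) ℂ) = algebraMap ℝ _ 1 by simp,
      cfc_algebraMap]
    simp
  refine ⟨fun i => q * (u * c i * u) * q, ?_, ?_, ?_⟩
  · intro i
    have h1 : 0 ≤ u * c i * u := by
      have h2 := star_left_conjugate_nonneg (hc0 i) u
      rwa [husa.star_eq] at h2
    have h3 := star_left_conjugate_nonneg h1 q
    rwa [hqsa.star_eq] at h3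
  · intro i
    simp only [_root_.map_mul, hπq, hπu, hπc i, one_mul, mul_one]
  · have hsum' : (∑ i, u * c i * u) = u * s * u := by
      simp [hsdef, Finset.mul_sum, Finset.sum_mul, mul_assoc]
    calc ∑ i, q * (u * c i * u) * q = q * (∑ i, u * c i * u) * q := by
          simp [Finset.mul_sum, Finset.sum_mul, mul_assoc]
      _ = q * (u * s * u) * q := by rw [hsum']
      _ ≤ q * 1 * q := by
          have h4 := star_left_conjugate_le_conjugate husu q
          rwa [hqsa.star_eq] at h4
      _ = g := by rw [mul_one, hqq]
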